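/- arXiv:1911.09700 — 3 statements merged into one kernel-verified Lean document; each statement's English description precedes it below -/
import Mathlib

section
/- For any n×n matrix M over the nonnegative reals, there exists a positive vector x ∈ ℝ^n with M ⊗ x ≤ x if and only if Tr(M) ≤ 1. -/
open scoped NNReal

/-- Square matrices over the max-times semifield of nonnegative reals. -/
abbrev TMat (n : ℕ) := Matrix (Fin n) (Fin n) ℝ≥0

/-- Tropical (max-times) matrix product. -/
noncomputable def tmul {n : ℕ} (A B : TMat n) : TMat n :=
  fun i j => Finset.univ.sup fun k => A i k * B k j

/-- Tropical (max-times) matrix-vector product. -/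
noncomputable def tmulVec {n : ℕ} (A : TMat n) (x : Fin n → ℝ≥0) : Fin n → ℝ≥0 :=
  fun i => Finset.univ.sup fun j => A i j * x j

/-- Tropical identity matrix. -/
noncomputable def tId (n : ℕ) : TMat n := fun i j => if i = j then 1 else 0

/-- Tropical matrix powers. -/
noncomputable def tpow {n : ℕ} (A : TMat n) : ℕ → TMat n
  | 0 => tId n
  | k + 1 => tmul A (tpow A k)

/-- Tropical (entrywise max) matrix addition. -/
noncomputable def tadd {n : ℕ} (A B : TMat n) : TMat n := fun i j => A i j ⊔ B i j

/-- Entrywise scalar multiplication. -/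
noncomputable def tsmul {n : ℕ} (a : ℝ≥0) (A : TMat n) : TMat n := fun i j => a * A i j

/-- Tropical trace: tr A = max_i a_{ii}. -/
noncomputable def ttr {n : ℕ} (A : TMat n) : ℝ≥0 := Finset.univ.sup fun i => A i i

/-- Tropical "determinant": Tr(A) = max_{k=1..n} tr(A^k). -/
noncomputable def tTr {n : ℕ} (A : TMat n) : ℝ≥0 :=
  (Finset.Icc 1 n).sup fun k => ttr (tpow A k)

/-- Kleene star: entrywise max of A^0, ..., A^{n-1}. -/
noncomputable def tstar {n : ℕ} (A : TMat n) : TMat n :=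
  fun i j => (Finset.range n).sup fun k => tpow A k i j

/-- Tropical product of a finite chain of matrices F 0 ⊗ F 1 ⊗ ⋯ ⊗ F (k-1). -/
noncomputable def tchain {n : ℕ} : (k : ℕ) → (Fin k → TMat n) → TMat n
  | 0, _ => tId n
  | k + 1, F => tmul (F 0) (tchain k fun t => F t.succ)

/-- Tuples of k nonnegative integers with sum m. -/
def tuples (k m : ℕ) : Finset (Fin k → Fin (m + 1)) :=
  Finset.univ.filter fun f => (∑ t, (f t : ℕ)) = m

/-- Tuples of k integers from {0,1} with sum l. -/
def binTuples (k l : ℕ) : Finset (Fin k → Fin 2) :=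
  Finset.univ.filter fun j => (∑ t, (j t : ℕ)) = l

/-- The objective f_M(x) = max_{i,j} m_{ij} x_j / x_i. -/
noncomputable def fobj {n : ℕ} (M : TMat n) (x : Fin n → ℝ≥0) : ℝ≥0 :=
  Finset.univ.sup fun p : Fin n × Fin n => M p.1 p.2 * x p.2 / x p.1

/-- Spectral radius: λ = max_{k=1..n} (tr(A^k))^{1/k}. -/
noncomputable def specRad {n : ℕ} (A : TMat n) : ℝ≥0 :=
  (Finset.Icc 1 n).sup fun k => ttr (tpow A k) ^ ((1 : ℝ) / k)

/-- σ = max over k=1..n-1, m=1..n-k and tuples (i_1,…,i_k) with sum m of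
    (tr(A^{i_1} C ⋯ A^{i_k} C))^{1/m}. -/
noncomputable def sigmaC {n : ℕ} (A C : TMat n) : ℝ≥0 :=
  (Finset.Icc 1 (n - 1)).sup fun k =>
    (Finset.Icc 1 (n - k)).sup fun m =>
      (tuples k m).sup fun f =>
        ttr (tchain k fun t => tmul (tpow A (f t : ℕ)) C) ^ ((1 : ℝ) / m)

/-- r_{k,l,m} = max over tuples (i_1,…,i_k) with sum m and (j_1,…,j_k) ∈ {0,1}^k with
    sum l of tr(A^{i_1} B^{j_1} C^{1-j_1} ⋯ A^{i_k} B^{j_k} C^{1-j_k}). -/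
noncomputable def rklm {n : ℕ} (A B C : TMat n) (k l m : ℕ) : ℝ≥0 :=
  (tuples k m).sup fun f =>
    (binTuples k l).sup fun j =>
      ttr (tchain k fun t =>
        tmul (tpow A (f t : ℕ)) (tmul (tpow B (j t : ℕ)) (tpow C (1 - (j t : ℕ)))))

/-- G(s) = max_{k,m,l} r_{k,l,m}^{1/l} s^{-m/l}. -/
noncomputable def Gfun {n : ℕ} (A B C : TMat n) (s : ℝ≥0) : ℝ≥0 :=
  (Finset.Icc 1 (n - 1)).sup fun k =>
    (Finset.Icc 1 (n - k)).sup fun m =>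
      (Finset.Icc 1 k).sup fun l =>
        rklm A B C k l m ^ ((1 : ℝ) / l) * s ^ (-(m : ℝ) / l)

/-- H(t) = max_{k,m,l} r_{k,l,m}^{1/m} t^{-l/m}. -/
noncomputable def Hfun {n : ℕ} (A B C : TMat n) (t : ℝ≥0) : ℝ≥0 :=
  (Finset.Icc 1 (n - 1)).sup fun k =>
    (Finset.Icc 1 (n - k)).sup fun m =>
      (Finset.Icc 1 k).sup fun l =>
        rklm A B C k l m ^ ((1 : ℝ) / m) * t ^ (-(l : ℝ) / m)

/-- Unconstrained r_{k,m} = max over tuples (i_1,…,i_k) with sum m of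
    tr(A^{i_1} B ⋯ A^{i_k} B). -/
noncomputable def rkm {n : ℕ} (A B : TMat n) (k m : ℕ) : ℝ≥0 :=
  (tuples k m).sup fun f => ttr (tchain k fun t => tmul (tpow A (f t : ℕ)) B)

/-- Unconstrained G(s) = max_{k,m} r_{k,m}^{1/k} s^{-m/k}. -/
noncomputable def Gfun0 {n : ℕ} (A B : TMat n) (s : ℝ≥0) : ℝ≥0 :=
  (Finset.Icc 1 (n - 1)).sup fun k =>
    (Finset.Icc 1 (n - k)).sup fun m =>
      rkm A B k m ^ ((1 : ℝ) / k) * s ^ (-(m : ℝ) / k)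

/-- Unconstrained H(t) = max_{k,m} r_{k,m}^{1/m} t^{-k/m}. -/
noncomputable def Hfun0 {n : ℕ} (A B : TMat n) (t : ℝ≥0) : ℝ≥0 :=
  (Finset.Icc 1 (n - 1)).sup fun k =>
    (Finset.Icc 1 (n - k)).sup fun m =>
      rkm A B k m ^ ((1 : ℝ) / m) * t ^ (-(k : ℝ) / m)

/-- Pareto-minimal points of a set V ⊆ ℝ≥0 × ℝ≥0. -/
def ParetoMin (V : Set (ℝ≥0 × ℝ≥0)) (p : ℝ≥0 × ℝ≥0) : Prop :=
  p ∈ V ∧ ¬∃ q ∈ V, q.1 ≤ p.1 ∧ q.2 ≤ p.2 ∧ q ≠ p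

lemma tmulVec_mono {n : ℕ} (A : TMat n) {x y : Fin n → ℝ≥0} (h : x ≤ y) :
    tmulVec A x ≤ tmulVec A y := by
  intro i
  apply Finset.sup_le
  intro j _
  show A i j * x j ≤ Finset.univ.sup fun j => A i j * y j
  exact le_trans (mul_le_mul_right (h j) _)
    (Finset.le_sup (f := fun j => A i j * y j) (Finset.mem_univ j))

lemma tmulVec_tmul_le {n : ℕ} (A B : TMat n) (x : Fin n → ℝ≥0) :
    tmulVec (tmul A B) x ≤ tmulVec A (tmulVec B x) := by
  intro i
  apply Finset.sup_le
  intro j _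
  obtain ⟨k, -, hk⟩ := Finset.exists_mem_eq_sup (Finset.univ : Finset (Fin n))
    ⟨i, Finset.mem_univ i⟩ (fun k => A i k * B k j)
  show tmul A B i j * x j ≤ _
  rw [show tmul A B i j = A i k * B k j from hk]
  calc A i k * B k j * x j = A i k * (B k j * x j) := mul_assoc _ _ _
    _ ≤ A i k * Finset.univ.sup (fun j => B k j * x j) :=
        mul_le_mul_right (Finset.le_sup (f := fun j => B k j * x j)
          (Finset.mem_univ j)) _
    _ = A i k * tmulVec B x k := rfl
    _ ≤ Finset.univ.sup (fun k => A i k * tmulVec B x k) :=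
        Finset.le_sup (f := fun k => A i k * tmulVec B x k) (Finset.mem_univ k)
    _ = tmulVec A (tmulVec B x) i := rfl

lemma path_le_tpow {n : ℕ} (M : TMat n) :
    ∀ (m : ℕ) (p : ℕ → Fin n),
      (∏ t ∈ Finset.range m, M (p t) (p (t + 1))) ≤ tpow M m (p 0) (p m) := by
  intro m
  induction m with
  | zero =>
    intro p
    simp [tpow, tId]
  | succ m ih =>
    intro p
    rw [Finset.prod_range_succ']
    have h := ih (fun t => p (t + 1))
    calc (∏ t ∈ Finset.range m, M (p (t + 1)) (p (t + 1 + 1))) * M (p 0) (p 1)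
        ≤ tpow M m (p 1) (p (m + 1)) * M (p 0) (p 1) := mul_le_mul_left h _
      _ = M (p 0) (p 1) * tpow M m (p 1) (p (m + 1)) := mul_comm _ _
      _ ≤ tpow M (m + 1) (p 0) (p (m + 1)) := by
            show M (p 0) (p 1) * tpow M m (p 1) (p (m + 1)) ≤
              Finset.univ.sup fun k => M (p 0) k * tpow M m k (p (m + 1))
            exact Finset.le_sup (f := fun k => M (p 0) k * tpow M m k (p (m + 1)))
              (Finset.mem_univ (p 1))

lemma tpow_exists_path {n : ℕ} (M : TMat n) :
    ∀ (m : ℕ) (i j : Fin n),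
      tpow M m i j = 0 ∨ ∃ p : ℕ → Fin n, p 0 = i ∧ p m = j ∧
        tpow M m i j ≤ ∏ t ∈ Finset.range m, M (p t) (p (t + 1)) := by
  intro m
  induction m with
  | zero =>
    intro i j
    by_cases h : i = j
    · subst h
      exact Or.inr ⟨fun _ => i, rfl, rfl, by simp [tpow, tId]⟩
    · exact Or.inl (by simp [tpow, tId, h])
  | succ m ih =>
    intro i j
    obtain ⟨k, -, hk⟩ := Finset.exists_mem_eq_sup (Finset.univ : Finset (Fin n))
      ⟨i, Finset.mem_univ i⟩ (fun k => M i k * tpow M m k j)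
    have hval : tpow M (m + 1) i j = M i k * tpow M m k j := hk
    rcases ih k j with h0 | ⟨p, hp0, hpm, hle⟩
    · exact Or.inl (by rw [hval, h0, mul_zero])
    · refine Or.inr ⟨fun t => Nat.casesOn t i p, rfl, hpm, ?_⟩
      rw [Finset.prod_range_succ']
      show tpow M (m + 1) i j ≤
        (∏ t ∈ Finset.range m, M (p t) (p (t + 1))) * M i (p 0)
      rw [hval, hp0, mul_comm]
      exact mul_le_mul_left hle _

lemma tpow_n_le {n : ℕ} (M : TMat n) (hTr : tTr M ≤ 1) (i j : Fin n) :
    tpow M n i j ≤ (Finset.range n).sup fun k => tpow M k i j := by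
  rcases tpow_exists_path M n i j with h | ⟨p, hp0, hpn, hle⟩
  · simp [h]
  have hn : 1 ≤ n := Nat.one_le_iff_ne_zero.mpr (fun h => by subst h; exact i.elim0)
  -- pigeonhole: some vertex repeats among p 0, ..., p n
  obtain ⟨a, b, hab, hbn, hpab⟩ : ∃ a b : ℕ, a < b ∧ b ≤ n ∧ p a = p b := by
    obtain ⟨a, b, hab, heq⟩ := Fintype.exists_ne_map_eq_of_card_lt
      (fun t : Fin (n + 1) => p (t : ℕ)) (by simp)
    rcases lt_or_gt_of_ne (fun h : (a : ℕ) = b => hab (Fin.ext h)) with h | h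
    · exact ⟨a, b, h, Nat.lt_succ_iff.mp b.isLt, heq⟩
    · exact ⟨b, a, h, Nat.lt_succ_iff.mp a.isLt, heq.symm⟩
  set c := b - a with hc
  have hc1 : 1 ≤ c := by omega
  have hacb : a + c = b := by omega
  have hcn : c ≤ n := by omega
  have hanb : a ≤ n - c := by omega
  set f : ℕ → ℝ≥0 := fun t => M (p t) (p (t + 1)) with hf
  set q : ℕ → Fin n := fun t => if t < a then p t else p (t + c) with hq
  have hqp : ∀ t, t ≤ a → q t = p t := by
    intro t ht
    rcases lt_or_eq_of_le ht with h | h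
    · simp [hq, h]
    · subst h
      simp only [hq, lt_irrefl, if_false, hacb, ← hpab]
  have hq0 : q 0 = i := by rw [hqp 0 (Nat.zero_le a), hp0]
  have hqm : q (n - c) = j := by
    have : ¬ (n - c < a) := not_lt.mpr hanb
    simp only [hq, this, if_false]
    rw [show n - c + c = n by omega, hpn]
  -- the spliced path product
  have hsplit : (∏ t ∈ Finset.range n, f t) =
      ((∏ t ∈ Finset.Ico 0 a, f t) * (∏ t ∈ Finset.Ico b n, f t)) *
        (∏ t ∈ Finset.Ico a b, f t) := by
    rw [Finset.range_eq_Ico,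
      ← Finset.prod_Ico_consecutive f (Nat.zero_le a) (by omega : a ≤ n),
      ← Finset.prod_Ico_consecutive f hab.le (hbn : b ≤ n)]
    ring
  have hcycle : (∏ t ∈ Finset.Ico a b, f t) ≤ 1 := by
    have h1 : (∏ t ∈ Finset.Ico a b, f t) = ∏ t ∈ Finset.range c, f (a + t) := by
      rw [Finset.prod_Ico_eq_prod_range, hc]
    have h2 := path_le_tpow M c (fun t => p (a + t))
    have h3 : tpow M c (p a) (p (a + c)) ≤ ttr (tpow M c) := by
      rw [hacb, ← hpab]
      show tpow M c (p a) (p a) ≤ Finset.univ.sup fun i => tpow M c i i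
      exact Finset.le_sup (f := fun i => tpow M c i i) (Finset.mem_univ (p a))
    have h4 : ttr (tpow M c) ≤ tTr M := by
      show ttr (tpow M c) ≤ (Finset.Icc 1 n).sup fun k => ttr (tpow M k)
      exact Finset.le_sup (f := fun k => ttr (tpow M k)) (Finset.mem_Icc.mpr ⟨hc1, hcn⟩)
    rw [h1]
    exact le_trans h2 (le_trans h3 (le_trans h4 hTr))
  have hnew : ((∏ t ∈ Finset.Ico 0 a, f t) * (∏ t ∈ Finset.Ico b n, f t)) ≤
      tpow M (n - c) i j := by
    have hgf1 : (∏ t ∈ Finset.Ico 0 a, (fun t => M (q t) (q (t + 1))) t) =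
        ∏ t ∈ Finset.Ico 0 a, f t := by
      apply Finset.prod_congr rfl
      intro t ht
      have ht' : t < a := (Finset.mem_Ico.mp ht).2
      show M (q t) (q (t + 1)) = M (p t) (p (t + 1))
      rw [hqp t ht'.le, hqp (t + 1) ht']
    have hgf2 : (∏ t ∈ Finset.Ico a (n - c), (fun t => M (q t) (q (t + 1))) t) =
        ∏ t ∈ Finset.Ico b n, f t := by
      rw [Finset.prod_Ico_eq_prod_range, Finset.prod_Ico_eq_prod_range]
      have : n - c - a = n - b := by omega
      rw [this]
      apply Finset.prod_congr rfl
      intro t _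
      show M (q (a + t)) (q (a + t + 1)) = M (p (b + t)) (p (b + t + 1))
      have e1 : q (a + t) = p (b + t) := by
        simp only [hq]
        rw [if_neg (by omega : ¬ (a + t < a))]
        congr 1
        omega
      have e2 : q (a + t + 1) = p (b + t + 1) := by
        simp only [hq]
        rw [if_neg (by omega : ¬ (a + t + 1 < a))]
        congr 1
        omega
      rw [e1, e2]
    have hsum : (∏ t ∈ Finset.range (n - c), M (q t) (q (t + 1))) =
        ((∏ t ∈ Finset.Ico 0 a, f t) * (∏ t ∈ Finset.Ico b n, f t)) := by
      rw [Finset.range_eq_Ico,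
        ← Finset.prod_Ico_consecutive _ (Nat.zero_le a) hanb, hgf1, hgf2]
    have := path_le_tpow M (n - c) q
    rw [hsum, hq0, hqm] at this
    exact this
  calc tpow M n i j ≤ ∏ t ∈ Finset.range n, f t := hle
    _ = ((∏ t ∈ Finset.Ico 0 a, f t) * (∏ t ∈ Finset.Ico b n, f t)) *
        (∏ t ∈ Finset.Ico a b, f t) := hsplit
    _ ≤ tpow M (n - c) i j * 1 := mul_le_mul' hnew hcycle
    _ = tpow M (n - c) i j := mul_one _
    _ ≤ (Finset.range n).sup (fun k => tpow M k i j) :=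
        Finset.le_sup (f := fun k => tpow M k i j)
          (Finset.mem_range.mpr (by omega : n - c < n))

/-- The tropical inequality M ⊗ x ≤ x has a positive solution iff Tr(M) ≤ 1. -/
theorem stmt8 {n : ℕ} (M : TMat n) :
    (∃ x : Fin n → ℝ≥0, (∀ i, 0 < x i) ∧ tmulVec M x ≤ x) ↔ tTr M ≤ 1 := by
  constructor
  · rintro ⟨x, hx, hMx⟩
    apply Finset.sup_le
    intro k _
    apply Finset.sup_le
    intro i _
    have hk : ∀ k, tmulVec (tpow M k) x ≤ x := by
      intro k
      induction k with
      | zero =>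
        intro i
        apply Finset.sup_le
        intro j _
        show tId n i j * x j ≤ x i
        by_cases h : i = j
        · subst h; simp [tId]
        · simp [tId, h]
      | succ k ih =>
        calc tmulVec (tpow M (k + 1)) x ≤ tmulVec M (tmulVec (tpow M k) x) :=
              tmulVec_tmul_le M (tpow M k) x
          _ ≤ tmulVec M x := tmulVec_mono M ih
          _ ≤ x := hMx
    have h1 : tpow M k i i * x i ≤ x i :=
      le_trans (Finset.le_sup (f := fun j => tpow M k i j * x j) (Finset.mem_univ i))
        (hk k i)
    exact le_of_mul_le_mul_right (by rw [one_mul]; exact h1) (hx i)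
  · intro hTr
    rcases Nat.eq_zero_or_pos n with hn | hn
    · subst hn
      exact ⟨fun _ => 1, fun i => i.elim0, fun i => i.elim0⟩
    refine ⟨fun i => Finset.univ.sup fun l => (Finset.range n).sup fun k => tpow M k i l,
      ?_, ?_⟩
    · intro i
      have h1 : (1 : ℝ≥0) ≤ Finset.univ.sup fun l =>
          (Finset.range n).sup fun k => tpow M k i l := by
        refine le_trans ?_ (Finset.le_sup (Finset.mem_univ i))
        refine le_trans ?_ (Finset.le_sup (Finset.mem_range.mpr hn))
        simp [tpow, tId]
      exact lt_of_lt_of_le one_pos h1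
    · intro i
      apply Finset.sup_le
      intro j _
      obtain ⟨l, -, hl⟩ := Finset.exists_mem_eq_sup (Finset.univ : Finset (Fin n))
        ⟨i, Finset.mem_univ i⟩ (fun l => (Finset.range n).sup fun k => tpow M k j l)
      obtain ⟨k, hkmem, hkv⟩ := Finset.exists_mem_eq_sup (Finset.range n)
        ⟨0, Finset.mem_range.mpr hn⟩ (fun k => tpow M k j l)
      show M i j * (Finset.univ.sup fun l => (Finset.range n).sup fun k => tpow M k j l) ≤
        Finset.univ.sup fun l => (Finset.range n).sup fun k => tpow M k i l
      rw [hl, hkv]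
      have hstep : M i j * tpow M k j l ≤ tpow M (k + 1) i l := by
        show M i j * tpow M k j l ≤ Finset.univ.sup fun j => M i j * tpow M k j l
        exact Finset.le_sup (f := fun j => M i j * tpow M k j l) (Finset.mem_univ j)
      have hkn : k < n := Finset.mem_range.mp hkmem
      have hfin : tpow M (k + 1) i l ≤ (Finset.range n).sup fun k => tpow M k i l := by
        rcases lt_or_eq_of_le (Nat.succ_le_of_lt hkn) with h | h
        · exact Finset.le_sup (f := fun k => tpow M k i l) (Finset.mem_range.mpr h)
        · rw [show k + 1 = n from h]; exact tpow_n_le M hTr i l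
      refine le_trans hstep (le_trans hfin ?_)
      refine le_trans ?_ (Finset.le_sup (Finset.mem_univ l))
      exact le_refl _
end

section
/- Let A, B, C be n×n matrices over the nonnegative reals with Tr(C) ≤ 1, and let α, β > 0. Then Tr(α^{-1}A ⊕ β^{-1}B ⊕ C) ≤ 1 if and only if α ≥ max(λ, σ) and β ≥ max(μ, θ, G(α)). -/
open scoped NNReal

/-!
Write `D = α⁻¹A ⊕ β⁻¹B ⊕ C`. Every entry of `D^k` is attained along a word of length `k` in
the letters `A, B, C`, so `Tr D ≤ 1` says that every word `w` of length `1, …, n` satisfies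
`tr w ≤ α^{#A} β^{#B}`. The trace is invariant under rotating a word, and a word containing a
letter other than `z` rotates into a product of blocks `z^{e_t} x_t` with `x_t ≠ z`. Blocking
over `A` the words that contain `A` and another letter gives exactly the chains defining `σ`
(all `x_t = C`) and the `r_{k,l,m}` (some `x_t = B`), which is `G(α) ≤ β`; blocking over `B`
the words in `B` and `C` containing both gives the chains defining `θ`; and words in a
single letter give `λ ≤ α`, `μ ≤ β` and `Tr C ≤ 1`.
-/

namespace NNReal

theorem rpow_one_div_le_iff {x z : ℝ≥0} {l : ℕ} (hl : 0 < l) :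
    x ^ ((1 : ℝ) / l) ≤ z ↔ x ≤ z ^ l := by
  rw [one_div, rpow_inv_le_iff (by exact_mod_cast hl), rpow_natCast]

theorem rpow_one_div_mul_rpow_neg_div_le_iff {x α β : ℝ≥0} (hα : α ≠ 0) {m l : ℕ}
    (hl : 0 < l) : x ^ ((1 : ℝ) / l) * α ^ (-(m : ℝ) / l) ≤ β ↔ x ≤ α ^ m * β ^ l := by
  have hl' : (0 : ℝ) < l := by exact_mod_cast hl
  rw [neg_div, rpow_neg, ← div_eq_mul_inv,
    div_le_iff₀ (rpow_pos (pos_iff_ne_zero.mpr hα)), one_div,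
    rpow_inv_le_iff hl', mul_rpow, ← rpow_mul,
    div_mul_cancel₀ (m : ℝ) hl'.ne', rpow_natCast, rpow_natCast, mul_comm]

end NNReal

namespace TMat

open Finset

variable {n : ℕ}

theorem tmul_assoc (A B C : TMat n) : tmul (tmul A B) C = tmul A (tmul B C) := by
  funext i j
  simp only [tmul, NNReal.finset_sup_mul, NNReal.mul_finset_sup, mul_assoc]
  exact Finset.sup_comm _ _ _

theorem tId_tmul (A : TMat n) : tmul (tId n) A = A := by
  funext i j
  simp only [tmul]
  refine le_antisymm (Finset.sup_le fun k _ => ?_) ?_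
  · by_cases h : i = k <;> simp [tId, h]
  · simpa [tId] using Finset.le_sup (f := fun k => tId n i k * A k j) (mem_univ i)

theorem tmul_tId (A : TMat n) : tmul A (tId n) = A := by
  funext i j
  simp only [tmul]
  refine le_antisymm (Finset.sup_le fun k _ => ?_) ?_
  · by_cases h : k = j <;> simp [tId, h]
  · simpa [tId] using Finset.le_sup (f := fun k => A i k * tId n k j) (mem_univ j)

theorem tmul_le_tmul {A A' B B' : TMat n} (hA : ∀ i j, A i j ≤ A' i j)
    (hB : ∀ i j, B i j ≤ B' i j) (i j : Fin n) : tmul A B i j ≤ tmul A' B' i j :=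
  Finset.sup_mono_fun fun k _ => mul_le_mul' (hA i k) (hB k j)

theorem ttr_tmul_comm (A B : TMat n) : ttr (tmul A B) = ttr (tmul B A) := by
  simp only [ttr, tmul]
  rw [Finset.sup_comm]
  exact Finset.sup_congr rfl fun _ _ => Finset.sup_congr rfl fun _ _ => mul_comm _ _

theorem ttr_le_ttr {A B : TMat n} (h : ∀ i j, A i j ≤ B i j) : ttr A ≤ ttr B :=
  Finset.sup_mono_fun fun i _ => h i i

theorem tsmul_one (A : TMat n) : tsmul 1 A = A := by
  funext i j; simp [tsmul]

theorem tsmul_tsmul (a b : ℝ≥0) (A : TMat n) : tsmul a (tsmul b A) = tsmul (a * b) A := by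
  funext i j; simp [tsmul, mul_assoc]

theorem tsmul_tmul (c : ℝ≥0) (A B : TMat n) : tmul (tsmul c A) B = tsmul c (tmul A B) := by
  funext i j; simp only [tmul, tsmul, NNReal.mul_finset_sup, mul_assoc]

theorem tmul_tsmul (c : ℝ≥0) (A B : TMat n) : tmul A (tsmul c B) = tsmul c (tmul A B) := by
  funext i j; simp only [tmul, tsmul, NNReal.mul_finset_sup, mul_left_comm]

theorem ttr_tsmul (c : ℝ≥0) (A : TMat n) : ttr (tsmul c A) = c * ttr A := by
  simp only [ttr, tsmul, NNReal.mul_finset_sup]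

noncomputable def tsup {ι : Type*} [Fintype ι] (E : ι → TMat n) : TMat n :=
  fun i j => univ.sup fun v => E v i j

theorem tadd_tadd_eq_tsup (A B C : TMat n) : tadd (tadd A B) C = tsup ![A, B, C] := by
  funext i j
  apply le_antisymm
  · exact sup_le (sup_le (le_sup (f := fun v => ![A, B, C] v i j) (mem_univ 0))
      (le_sup (f := fun v => ![A, B, C] v i j) (mem_univ 1)))
      (le_sup (f := fun v => ![A, B, C] v i j) (mem_univ 2))
  · refine Finset.sup_le fun v _ => ?_
    fin_cases v
    · exact le_sup_of_le_left le_sup_left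
    · exact le_sup_of_le_left le_sup_right
    · exact le_sup_right

section Words

variable {ι : Type*}

noncomputable def tword (N : ι → TMat n) (u : List ι) : TMat n :=
  u.foldr (fun v M => tmul (N v) M) (tId n)

@[simp] theorem tword_nil (N : ι → TMat n) : tword N [] = tId n := rfl

@[simp] theorem tword_cons (N : ι → TMat n) (v : ι) (u : List ι) :
    tword N (v :: u) = tmul (N v) (tword N u) := rfl

theorem tword_append (N : ι → TMat n) (u v : List ι) :
    tword N (u ++ v) = tmul (tword N u) (tword N v) := by
  induction u with
  | nil => simp [tId_tmul]
  | cons x u ih => simp [ih, tmul_assoc]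

theorem tword_replicate (N : ι → TMat n) (x : ι) (k : ℕ) :
    tword N (List.replicate k x) = tpow (N x) k := by
  induction k with
  | zero => rfl
  | succ k ih => simp [List.replicate_succ, ih, tpow]

theorem ttr_tword_of_isRotated (N : ι → TMat n) {u v : List ι} (h : u ~r v) :
    ttr (tword N u) = ttr (tword N v) := by
  obtain ⟨k, rfl⟩ := h
  rw [List.rotate_eq_drop_append_take_mod, tword_append, ttr_tmul_comm, ← tword_append,
    List.take_append_drop]

theorem tword_tsmul (c : ι → ℝ≥0) (N : ι → TMat n) (u : List ι) :
    tword (fun v => tsmul (c v) (N v)) u = tsmul (u.map c).prod (tword N u) := by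
  induction u with
  | nil => simp [tsmul_one]
  | cons v u ih => simp [ih, tsmul_tmul, tmul_tsmul, tsmul_tsmul, mul_comm]

section Sup

variable [Fintype ι] (E : ι → TMat n)

theorem tword_le_tpow_tsup (u : List ι) (i j : Fin n) :
    tword E u i j ≤ tpow (tsup E) u.length i j := by
  induction u generalizing i j with
  | nil => exact le_rfl
  | cons v u ih =>
    exact tmul_le_tmul (fun i j => le_sup (f := fun v => E v i j) (mem_univ v)) ih i j

theorem exists_tpow_tsup_le_tword [Nonempty ι] (k : ℕ) (i j : Fin n) :
    ∃ u : List ι, u.length = k ∧ tpow (tsup E) k i j ≤ tword E u i j := by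
  induction k generalizing i j with
  | zero => exact ⟨[], rfl, le_rfl⟩
  | succ k ih =>
    obtain ⟨p, -, hp⟩ := exists_mem_eq_sup univ ⟨i, mem_univ i⟩
      fun p => tsup E i p * tpow (tsup E) k p j
    obtain ⟨v, -, hv⟩ := exists_mem_eq_sup univ univ_nonempty fun v => E v i p
    obtain ⟨u, rfl, hu⟩ := ih p j
    refine ⟨v :: u, rfl, ?_⟩
    calc tpow (tsup E) (u.length + 1) i j = E v i p * tpow (tsup E) u.length p j := by
          rw [tpow, tmul, hp, tsup, hv]
      _ ≤ E v i p * tword E u p j := mul_le_mul' le_rfl hu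
      _ ≤ tword E (v :: u) i j := le_sup (f := fun p => E v i p * tword E u p j) (mem_univ p)

theorem ttr_tpow_tsup_le_iff [Nonempty ι] (k : ℕ) (s : ℝ≥0) :
    ttr (tpow (tsup E) k) ≤ s ↔ ∀ u : List ι, u.length = k → ttr (tword E u) ≤ s := by
  refine ⟨fun h u hu => ?_, fun h => ?_⟩
  · subst hu
    exact (ttr_le_ttr (tword_le_tpow_tsup E u)).trans h
  refine Finset.sup_le fun i _ => ?_
  obtain ⟨u, hu, hle⟩ := exists_tpow_tsup_le_tword E k i i
  exact hle.trans ((le_sup (f := fun i => tword E u i i) (mem_univ i)).trans (h u hu))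

end Sup

def blockWord (z : ι) : (k : ℕ) → (Fin k → ℕ) → (Fin k → ι) → List ι
  | 0, _, _ => []
  | k + 1, e, x =>
    List.replicate (e 0) z ++ x 0 :: blockWord z k (fun t => e t.succ) (fun t => x t.succ)

theorem tword_blockWord (N : ι → TMat n) (z : ι) (k : ℕ) (e : Fin k → ℕ) (x : Fin k → ι) :
    tword N (blockWord z k e x) = tchain k fun t => tmul (tpow (N z) (e t)) (N (x t)) := by
  induction k with
  | zero => rfl
  | succ k ih => simp [blockWord, tchain, tword_append, tword_replicate, ih, tmul_assoc]

theorem length_blockWord (z : ι) (k : ℕ) (e : Fin k → ℕ) (x : Fin k → ι) :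
    (blockWord z k e x).length = ∑ t, e t + k := by
  induction k with
  | zero => rfl
  | succ k ih => simp [blockWord, ih, Fin.sum_univ_succ]; omega

theorem mem_blockWord (z : ι) (k : ℕ) (e : Fin k → ℕ) (x : Fin k → ι) (t : Fin k) :
    x t ∈ blockWord z k e x := by
  induction k with
  | zero => exact t.elim0
  | succ k ih =>
    cases t using Fin.cases with
    | zero => simp [blockWord]
    | succ t => simp [blockWord, ih (fun t => e t.succ) (fun t => x t.succ) t]

theorem exists_eq_blockWord_append_replicate (z : ι) (u : List ι) :
    ∃ (k : ℕ) (e : Fin k → ℕ) (x : Fin k → ι) (r : ℕ),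
      (∀ t, x t ≠ z) ∧ u = blockWord z k e x ++ List.replicate r z := by
  induction u with
  | nil => exact ⟨0, Fin.elim0, Fin.elim0, 0, fun t => t.elim0, rfl⟩
  | cons y u ih =>
    obtain ⟨k, e, x, r, hx, rfl⟩ := ih
    by_cases hy : y = z
    · subst hy
      cases k with
      | zero => exact ⟨0, e, x, r + 1, hx, by simp [blockWord, List.replicate_succ]⟩
      | succ k =>
        refine ⟨k + 1, Fin.cons (e 0 + 1) (Fin.tail e), x, r, hx, ?_⟩
        simp [blockWord, List.replicate_succ, Fin.tail]
    · exact ⟨k + 1, Fin.cons 0 e, Fin.cons y x, r, Fin.cases hy hx, by simp [blockWord]⟩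

theorem exists_isRotated_blockWord (z : ι) {u : List ι} (hu : ∃ y ∈ u, y ≠ z) :
    ∃ (k : ℕ) (e : Fin k → ℕ) (x : Fin k → ι),
      0 < k ∧ (∀ t, x t ≠ z) ∧ u ~r blockWord z k e x := by
  obtain ⟨k, e, x, r, hx, rfl⟩ := exists_eq_blockWord_append_replicate z u
  cases k with
  | zero =>
    obtain ⟨y, hy, hyz⟩ := hu
    exact absurd (List.eq_of_mem_replicate (by simpa [blockWord] using hy)) hyz
  | succ k =>
    refine ⟨k + 1, Fin.cons (r + e 0) (Fin.tail e), x, k.succ_pos, hx, ?_⟩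
    convert List.isRotated_append using 1
    simp [blockWord, Fin.tail, ← List.replicate_append_replicate]

variable [DecidableEq ι]

theorem count_blockWord_self (z : ι) (k : ℕ) (e : Fin k → ℕ) {x : Fin k → ι}
    (hx : ∀ t, x t ≠ z) : (blockWord z k e x).count z = ∑ t, e t := by
  induction k with
  | zero => rfl
  | succ k ih =>
    simp [blockWord, Fin.sum_univ_succ, ih (fun t => e t.succ) (fun t => hx t.succ), hx 0]

theorem count_blockWord_of_ne {y z : ι} (hyz : y ≠ z) (k : ℕ) (e : Fin k → ℕ)
    (x : Fin k → ι) : (blockWord z k e x).count y = ∑ t, if x t = y then 1 else 0 := by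
  induction k with
  | zero => rfl
  | succ k ih =>
    simp only [blockWord, List.count_append, List.count_replicate, List.count_cons,
      beq_iff_eq, hyz.symm, if_false, ih (fun t => e t.succ) (fun t => x t.succ),
      Fin.sum_univ_succ]
    omega

end Words

theorem mem_tuples_iff {k m : ℕ} {f : Fin k → Fin (m + 1)} :
    f ∈ tuples k m ↔ ∑ t, (f t : ℕ) = m := by
  simp [tuples]

theorem mem_binTuples_iff {k l : ℕ} {j : Fin k → Fin 2} :
    j ∈ binTuples k l ↔ ∑ t, (j t : ℕ) = l := by
  simp [binTuples]

theorem exists_mem_tuples {k : ℕ} (e : Fin k → ℕ) :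
    ∃ f ∈ tuples k (∑ t, e t), ∀ t, (f t : ℕ) = e t :=
  ⟨fun t => ⟨e t, Nat.lt_succ_of_le (single_le_sum (fun _ _ => Nat.zero_le _) (mem_univ t))⟩,
    mem_tuples_iff.mpr rfl, fun _ => rfl⟩

theorem sum_val_le_card {k : ℕ} (j : Fin k → Fin 2) : ∑ t, (j t : ℕ) ≤ k := by
  simpa using sum_le_sum fun t (_ : t ∈ univ) => Nat.le_of_lt_succ (j t).isLt

theorem tTr_le_iff (X : TMat n) (s : ℝ≥0) :
    tTr X ≤ s ↔ ∀ k, 1 ≤ k → k ≤ n → ttr (tpow X k) ≤ s := by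
  simp [tTr, Finset.sup_le_iff, and_imp]

theorem specRad_le_iff (X : TMat n) (s : ℝ≥0) :
    specRad X ≤ s ↔ ∀ k, 1 ≤ k → k ≤ n → ttr (tpow X k) ≤ s ^ k := by
  simp only [specRad, Finset.sup_le_iff, mem_Icc, and_imp]
  exact forall_congr' fun k => forall_congr' fun hk => forall_congr' fun _ =>
    NNReal.rpow_one_div_le_iff hk

theorem sigmaC_le_iff (X Y : TMat n) (s : ℝ≥0) :
    sigmaC X Y ≤ s ↔ ∀ (k : ℕ) (e : Fin k → ℕ), 1 ≤ k → 1 ≤ ∑ t, e t → k + ∑ t, e t ≤ n →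
      ttr (tchain k fun t => tmul (tpow X (e t)) Y) ≤ s ^ ∑ t, e t := by
  simp only [sigmaC, Finset.sup_le_iff, mem_Icc]
  refine ⟨fun h k e hk he hkn => ?_, fun h k hk m hm f hf => ?_⟩
  · obtain ⟨f, hf, hfe⟩ := exists_mem_tuples e
    have := h k ⟨hk, by omega⟩ _ ⟨he, by omega⟩ f hf
    simp only [hfe] at this
    exact (NNReal.rpow_one_div_le_iff he).mp this
  · have hsum := mem_tuples_iff.mp hf
    have := h k (fun t => f t) hk.1 (by simp only [hsum]; omega) (by simp only [hsum]; omega)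
    rw [hsum] at this
    exact (NNReal.rpow_one_div_le_iff hm.1).mpr this

theorem Gfun_le_iff (A B C : TMat n) {α : ℝ≥0} (hα : α ≠ 0) (β : ℝ≥0) :
    Gfun A B C α ≤ β ↔ ∀ (k : ℕ) (e : Fin k → ℕ) (j : Fin k → Fin 2),
      1 ≤ k → 1 ≤ ∑ t, e t → k + ∑ t, e t ≤ n → 1 ≤ ∑ t, (j t : ℕ) →
      ttr (tchain k fun t => tmul (tpow A (e t)) (tmul (tpow B (j t)) (tpow C (1 - j t)))) ≤
        α ^ (∑ t, e t) * β ^ ∑ t, (j t : ℕ) := by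
  simp only [Gfun, Finset.sup_le_iff, mem_Icc]
  refine ⟨fun h k e j hk he hkn hj => ?_, fun h k hk m hm l hl => ?_⟩
  · obtain ⟨f, hf, hfe⟩ := exists_mem_tuples e
    have hG := (NNReal.rpow_one_div_mul_rpow_neg_div_le_iff hα hj).mp
      (h k ⟨hk, by omega⟩ _ ⟨he, by omega⟩ _ ⟨hj, sum_val_le_card j⟩)
    have hr : ttr (tchain k fun t =>
        tmul (tpow A (f t)) (tmul (tpow B (j t)) (tpow C (1 - j t)))) ≤
          rklm A B C k (∑ t, (j t : ℕ)) (∑ t, e t) :=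
      (le_sup (f := fun j : Fin k → Fin 2 => ttr (tchain k fun t =>
          tmul (tpow A (f t)) (tmul (tpow B (j t)) (tpow C (1 - j t)))))
        (mem_binTuples_iff.mpr rfl)).trans
      (le_sup (f := fun f : Fin k → Fin (∑ t, e t + 1) =>
        (binTuples k (∑ t, (j t : ℕ))).sup fun j => ttr (tchain k fun t =>
          tmul (tpow A (f t)) (tmul (tpow B (j t)) (tpow C (1 - j t))))) hf)
    simp only [hfe] at hr
    exact hr.trans hG
  · rw [NNReal.rpow_one_div_mul_rpow_neg_div_le_iff hα hl.1]
    refine Finset.sup_le fun f hf => Finset.sup_le fun j hj => ?_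
    have hsum := mem_tuples_iff.mp hf
    have hjsum := mem_binTuples_iff.mp hj
    have := h k (fun t => f t) j hk.1 (by simp only [hsum]; omega) (by simp only [hsum]; omega)
      (by omega)
    rwa [hsum, hjsum] at this

section Letters

variable (A B C : TMat n) (α β : ℝ≥0)

theorem sigmaC_le_and_Gfun_le_iff (hα : α ≠ 0) :
    sigmaC A C ≤ α ∧ Gfun A B C α ≤ β ↔ ∀ (k : ℕ) (e : Fin k → ℕ) (j : Fin k → Fin 2),
      1 ≤ k → 1 ≤ ∑ t, e t → k + ∑ t, e t ≤ n →
      ttr (tchain k fun t => tmul (tpow A (e t)) (tmul (tpow B (j t)) (tpow C (1 - j t)))) ≤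
        α ^ (∑ t, e t) * β ^ ∑ t, (j t : ℕ) := by
  rw [sigmaC_le_iff, Gfun_le_iff A B C hα]
  have hBC : tmul (tpow B 0) (tpow C (1 - 0)) = C := by simp [tpow, tId_tmul, tmul_tId]
  refine ⟨fun ⟨hσ, hG⟩ k e j hk he hkn => ?_, fun h => ⟨fun k e hk he hkn => ?_,
    fun k e j hk he hkn _ => h k e j hk he hkn⟩⟩
  · rcases Nat.eq_zero_or_pos (∑ t, (j t : ℕ)) with hj | hj
    · obtain rfl : j = 0 := funext fun t => Fin.ext (sum_eq_zero_iff.mp hj t (mem_univ t))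
      simpa [hBC] using hσ k e hk he hkn
    · exact hG k e j hk he hkn hj
  · simpa [hBC] using h k e 0 hk he hkn

theorem prod_map_scalars_eq_inv (u : List (Fin 3)) :
    (u.map ![α⁻¹, β⁻¹, 1]).prod = (α ^ u.count 0 * β ^ u.count 1)⁻¹ := by
  induction u with
  | nil => simp
  | cons v u ih =>
    rw [List.map_cons, List.prod_cons, ih, List.count_cons, List.count_cons]
    fin_cases v <;> simp [pow_succ] <;> ring

def WordBound (u : List (Fin 3)) : Prop :=
  ttr (tword ![A, B, C] u) ≤ α ^ u.count 0 * β ^ u.count 1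

theorem tTr_le_one_iff_forall_wordBound (hα : α ≠ 0) (hβ : β ≠ 0) :
    tTr (tadd (tadd (tsmul α⁻¹ A) (tsmul β⁻¹ B)) C) ≤ 1 ↔
      ∀ u : List (Fin 3), 1 ≤ u.length → u.length ≤ n → WordBound A B C α β u := by
  have hD : tadd (tadd (tsmul α⁻¹ A) (tsmul β⁻¹ B)) C =
      tsup fun v => tsmul (![α⁻¹, β⁻¹, 1] v) (![A, B, C] v) := by
    rw [tadd_tadd_eq_tsup]
    congr 1
    funext v
    fin_cases v
    · rfl
    · rfl
    · exact (tsmul_one C).symm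
  have hw : ∀ u : List (Fin 3),
      ttr (tword (fun v => tsmul (![α⁻¹, β⁻¹, 1] v) (![A, B, C] v)) u) ≤ 1 ↔
        WordBound A B C α β u := fun u => by
    rw [tword_tsmul, ttr_tsmul, prod_map_scalars_eq_inv, inv_mul_le_iff₀ (by positivity), mul_one,
      WordBound]
  rw [hD, tTr_le_iff]
  simp only [ttr_tpow_tsup_le_iff, hw]
  exact ⟨fun h u h1 h2 => h _ h1 h2 u rfl, fun h k h1 h2 u hu => h u (hu ▸ h1) (hu ▸ h2)⟩

variable {A B C α β}

theorem WordBound.of_isRotated {u v : List (Fin 3)} (h : u ~r v) (hu : WordBound A B C α β u) :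
    WordBound A B C α β v := by
  rwa [WordBound, ← ttr_tword_of_isRotated _ h, ← h.perm.count_eq 0, ← h.perm.count_eq 1]

theorem fin_three_eq_two {y : Fin 3} (h0 : y ≠ 0) (h1 : y ≠ 1) : y = 2 := by
  revert y; decide

def bcLetter : Fin 2 → Fin 3 := ![2, 1]

theorem bcLetter_ne_zero (j : Fin 2) : bcLetter j ≠ 0 := by
  revert j; decide

theorem exists_bcLetter_eq {y : Fin 3} (hy : y ≠ 0) : ∃ j, bcLetter j = y := by
  revert y; decide

theorem abc_bcLetter (j : Fin 2) :
    ![A, B, C] (bcLetter j) = tmul (tpow B j) (tpow C (1 - j)) := by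
  fin_cases j <;> simp [bcLetter, tpow, tId_tmul, tmul_tId]

theorem wordBound_blockWord_bcLetter_iff (k : ℕ) (e : Fin k → ℕ) (j : Fin k → Fin 2) :
    WordBound A B C α β (blockWord 0 k e (bcLetter ∘ j)) ↔
      ttr (tchain k fun t => tmul (tpow A (e t)) (tmul (tpow B (j t)) (tpow C (1 - j t)))) ≤
        α ^ (∑ t, e t) * β ^ ∑ t, (j t : ℕ) := by
  have hj : ∀ t, (if bcLetter (j t) = 1 then 1 else 0) = (j t : ℕ) := fun t => by
    generalize j t = i; revert i; decide
  rw [WordBound, tword_blockWord,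
    count_blockWord_self 0 k e (x := bcLetter ∘ j) fun t => bcLetter_ne_zero (j t),
    count_blockWord_of_ne (by decide)]
  simp only [Function.comp_apply, abc_bcLetter, hj]
  rfl

theorem wordBound_blockWord_two_iff (k : ℕ) (e : Fin k → ℕ) :
    WordBound A B C α β (blockWord 1 k e fun _ => 2) ↔
      ttr (tchain k fun t => tmul (tpow B (e t)) C) ≤ β ^ ∑ t, e t := by
  rw [WordBound, tword_blockWord, count_blockWord_self 1 k e fun _ => by decide,
    count_blockWord_of_ne (by decide)]
  simp

theorem wordBound_of_zero_mem
    (hAG : ∀ (k : ℕ) (e : Fin k → ℕ) (j : Fin k → Fin 2), 1 ≤ k → 1 ≤ ∑ t, e t →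
      k + ∑ t, e t ≤ n →
      ttr (tchain k fun t => tmul (tpow A (e t)) (tmul (tpow B (j t)) (tpow C (1 - j t)))) ≤
        α ^ (∑ t, e t) * β ^ ∑ t, (j t : ℕ))
    {u : List (Fin 3)} (h0 : 0 ∈ u) (hne : ∃ y ∈ u, y ≠ 0) (hn : u.length ≤ n) :
    WordBound A B C α β u := by
  obtain ⟨k, e, x, hk, hx, hu⟩ := exists_isRotated_blockWord 0 hne
  choose j hj using fun t => exists_bcLetter_eq (hx t)
  obtain rfl : x = bcLetter ∘ j := funext fun t => (hj t).symm
  have hlen := hu.perm.length_eq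
  have hcount := hu.perm.count_eq 0
  rw [length_blockWord] at hlen
  rw [count_blockWord_self 0 k e hx] at hcount
  have := List.count_pos_iff.mpr h0
  exact WordBound.of_isRotated hu.symm
    ((wordBound_blockWord_bcLetter_iff k e j).mpr (hAG k e j hk (by omega) (by omega)))

theorem wordBound_of_one_mem
    (hBC : ∀ (k : ℕ) (e : Fin k → ℕ), 1 ≤ k → 1 ≤ ∑ t, e t → k + ∑ t, e t ≤ n →
      ttr (tchain k fun t => tmul (tpow B (e t)) C) ≤ β ^ ∑ t, e t)
    {u : List (Fin 3)} (h0 : 0 ∉ u) (h1 : 1 ∈ u) (hne : ∃ y ∈ u, y ≠ 1) (hn : u.length ≤ n) :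
    WordBound A B C α β u := by
  obtain ⟨k, e, x, hk, hx, hu⟩ := exists_isRotated_blockWord 1 hne
  obtain rfl : x = fun _ => 2 := funext fun t =>
    fin_three_eq_two (ne_of_mem_of_not_mem (hu.mem_iff.mpr (mem_blockWord 1 k e x t)) h0) (hx t)
  have hlen := hu.perm.length_eq
  have hcount := hu.perm.count_eq 1
  rw [length_blockWord] at hlen
  rw [count_blockWord_self 1 k e fun _ => by decide] at hcount
  have := List.count_pos_iff.mpr h1
  exact WordBound.of_isRotated hu.symm
    ((wordBound_blockWord_two_iff k e).mpr (hBC k e hk (by omega) (by omega)))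

theorem wordBound_replicate_iff (x : Fin 3) (k : ℕ) :
    WordBound A B C α β (List.replicate k x) ↔
      ttr (tpow (![A, B, C] x) k) ≤
        α ^ (if x = 0 then k else 0) * β ^ (if x = 1 then k else 0) := by
  simp only [WordBound, tword_replicate, List.count_replicate, beq_iff_eq]

theorem le_of_forall_wordBound (hα : α ≠ 0)
    (hw : ∀ u : List (Fin 3), 1 ≤ u.length → u.length ≤ n → WordBound A B C α β u) :
    (specRad A ≤ α ∧ sigmaC A C ≤ α) ∧ (specRad B ≤ β ∧ sigmaC B C ≤ β) ∧ Gfun A B C α ≤ β := by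
  have hrep : ∀ x k, 1 ≤ k → k ≤ n → WordBound A B C α β (List.replicate k x) :=
    fun x k h1 h2 => hw _ (by simpa using h1) (by simpa using h2)
  have hblock : ∀ z k (e : Fin k → ℕ) (x : Fin k → Fin 3), 1 ≤ k → k + ∑ t, e t ≤ n →
      WordBound A B C α β (blockWord z k e x) := fun z k e x hk hkn =>
    hw _ (by rw [length_blockWord]; omega) (by rw [length_blockWord]; omega)
  obtain ⟨hσ, hG⟩ := (sigmaC_le_and_Gfun_le_iff A B C α β hα).mpr fun k e j hk _ hkn =>
    (wordBound_blockWord_bcLetter_iff k e j).mp (hblock 0 k e _ hk hkn)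
  refine ⟨⟨(specRad_le_iff A α).mpr fun k h1 h2 => ?_, hσ⟩,
    ⟨(specRad_le_iff B β).mpr fun k h1 h2 => ?_, (sigmaC_le_iff B C β).mpr
      fun k e hk _ hkn => (wordBound_blockWord_two_iff k e).mp (hblock 1 k e _ hk hkn)⟩, hG⟩
  · simpa using (wordBound_replicate_iff 0 k).mp (hrep 0 k h1 h2)
  · simpa using (wordBound_replicate_iff 1 k).mp (hrep 1 k h1 h2)

theorem wordBound_of_le (hC : tTr C ≤ 1) (hα : α ≠ 0)
    (h : (specRad A ≤ α ∧ sigmaC A C ≤ α) ∧ (specRad B ≤ β ∧ sigmaC B C ≤ β) ∧ Gfun A B C α ≤ β)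
    {u : List (Fin 3)} (h1 : 1 ≤ u.length) (h2 : u.length ≤ n) : WordBound A B C α β u := by
  obtain ⟨⟨hspecA, hσ⟩, ⟨hspecB, hθ⟩, hG⟩ := h
  by_cases hA : ∀ y ∈ u, y = 0
  · rw [List.eq_replicate_iff.mpr ⟨rfl, hA⟩, wordBound_replicate_iff]
    simpa using (specRad_le_iff A α).mp hspecA _ h1 h2
  push Not at hA
  by_cases h0 : 0 ∈ u
  · exact wordBound_of_zero_mem ((sigmaC_le_and_Gfun_le_iff A B C α β hα).mp ⟨hσ, hG⟩) h0 hA h2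
  by_cases hB : ∀ y ∈ u, y = 1
  · rw [List.eq_replicate_iff.mpr ⟨rfl, hB⟩, wordBound_replicate_iff]
    simpa using (specRad_le_iff B β).mp hspecB _ h1 h2
  push Not at hB
  by_cases h1' : 1 ∈ u
  · exact wordBound_of_one_mem ((sigmaC_le_iff B C β).mp hθ) h0 h1' hB h2
  have hC' : ∀ y ∈ u, y = 2 := fun y hy =>
    fin_three_eq_two (ne_of_mem_of_not_mem hy h0) (ne_of_mem_of_not_mem hy h1')
  rw [List.eq_replicate_iff.mpr ⟨rfl, hC'⟩, wordBound_replicate_iff]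
  simpa using (tTr_le_iff C 1).mp hC _ h1 h2

end Letters

end TMat

open TMat in
/-- With Tr(C) ≤ 1 and α, β > 0: Tr(α⁻¹A ⊕ β⁻¹B ⊕ C) ≤ 1 iff
α ≥ max(λ, σ) and β ≥ max(μ, θ, G(α)). -/
theorem stmt11 {n : ℕ} (A B C : TMat n) (hC : tTr C ≤ 1)
    (α β : ℝ≥0) (hα : 0 < α) (hβ : 0 < β) :
    tTr (tadd (tadd (tsmul α⁻¹ A) (tsmul β⁻¹ B)) C) ≤ 1 ↔
      (specRad A ⊔ sigmaC A C ≤ α ∧ specRad B ⊔ sigmaC B C ⊔ Gfun A B C α ≤ β) := by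
  rw [tTr_le_one_iff_forall_wordBound A B C α β hα.ne' hβ.ne', sup_le_iff, sup_le_iff,
    sup_le_iff]
  exact ⟨le_of_forall_wordBound hα.ne', fun h _ => wordBound_of_le hC hα.ne' h⟩
end

section
/- Let A, B, C be n×n matrices over the nonnegative reals with λ > 0, μ > 0 and Tr(C) ≤ 1, and suppose H(max(μ, θ)) ≤ max(λ, σ). Then: (i) every feasible positive vector x (i.e., with C ⊗ x ≤ x) satisfies f_A(x) ≥ max(λ, σ) and f_B(x) ≥ max(μ, θ); and (ii) there exists a feasible positive vector x attaining f_A(x) = max(λ, σ) and f_B(x) = max(μ, θ) simultaneously. Consequently the Pareto frontier of the bi-objective problem of minimizing (f_A(x), f_B(x)) over feasible x reduces to the single point (max(λ, σ), max(μ, θ)). -/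
open scoped NNReal

/-- The set of objective values over feasible positive vectors of the constrained problem. -/
def VC {n : ℕ} (A B C : TMat n) : Set (ℝ≥0 × ℝ≥0) :=
  {p | ∃ x : Fin n → ℝ≥0, (∀ i, 0 < x i) ∧ tmulVec C x ≤ x ∧ p = (fobj A x, fobj B x)}

/-! Every feasible `x` satisfies `A ⊗ x ≤ f_A(x) x` and `C ⊗ x ≤ x`, so a cyclic product of `A`s
and `C`s containing `m` factors `A` has trace at most `f_A(x) ^ m`; this is the lower bound
`f_A(x) ≥ max(λ, σ)`, and likewise `f_B(x) ≥ max(μ, θ)`.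

For attainment put `α = max(λ, σ)`, `β = max(μ, θ)` and `D = α⁻¹ A ⊕ β⁻¹ B ⊕ C`. A cycle of `D`
of length `k ≤ n` reads a cyclic word in `A`, `B`, `C` with `a` letters `A` and `b` letters `B`,
and carries the scalar `α⁻ᵃ β⁻ᵇ`. Rotating the word, it splits into blocks `A^i ⊗ B`, `A^i ⊗ C`
(or `B^i ⊗ C` when no `A` occurs), so its trace is at most `λᵏ`, `μᵏ`, `Tr C`, `σᵃ`, `θᵇ` or, when
both `A` and `B` occur, `H(β)ᵃ βᵇ ≤ αᵃ βᵇ`. Hence `Tr D ≤ 1`, and the row maxima of the Kleene star of `D` form a positive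
`x` with `D ⊗ x ≤ x`: it is feasible, with `f_A(x) ≤ α` and `f_B(x) ≤ β`. -/

open Finset

section TropicalAlgebra

variable {n : ℕ}

lemma le_tmul (A B : TMat n) (i j t : Fin n) : A i t * B t j ≤ tmul A B i j :=
  le_sup (f := fun u => A i u * B u j) (mem_univ t)

lemma tmul_le {A B : TMat n} {i j : Fin n} {c : ℝ≥0} (h : ∀ t, A i t * B t j ≤ c) :
    tmul A B i j ≤ c :=
  Finset.sup_le fun t _ => h t

lemma tmul_assoc (A B C : TMat n) : tmul (tmul A B) C = tmul A (tmul B C) := by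
  funext i j
  simp only [tmul, NNReal.finset_sup_mul, NNReal.mul_finset_sup, mul_assoc]
  exact Finset.sup_comm _ _ _

@[simp] lemma tmul_tId (A : TMat n) : tmul A (tId n) = A := by
  funext i j
  refine le_antisymm (tmul_le fun t => ?_) (by simpa [tId] using le_tmul A (tId n) i j j)
  by_cases h : t = j <;> simp [tId, h]

@[simp] lemma tId_tmul (A : TMat n) : tmul (tId n) A = A := by
  funext i j
  refine le_antisymm (tmul_le fun t => ?_) (by simpa [tId] using le_tmul (tId n) A i j i)
  by_cases h : i = t <;> simp [tId, h]

@[simp] lemma tpow_zero (A : TMat n) : tpow A 0 = tId n := rfl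

lemma tpow_succ (A : TMat n) (k : ℕ) : tpow A (k + 1) = tmul A (tpow A k) := rfl

@[simp] lemma tpow_one (A : TMat n) : tpow A 1 = A := by
  rw [tpow_succ, tpow_zero, tmul_tId]

lemma tpow_add (A : TMat n) (j k : ℕ) : tpow A (j + k) = tmul (tpow A j) (tpow A k) := by
  induction j with
  | zero => simp
  | succ j ih => rw [Nat.add_right_comm, tpow_succ, ih, tpow_succ, tmul_assoc]

lemma tpow_succ' (A : TMat n) (k : ℕ) : tpow A (k + 1) = tmul (tpow A k) A := by
  rw [tpow_add, tpow_one]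

lemma ttr_tmul_comm (A B : TMat n) : ttr (tmul A B) = ttr (tmul B A) := by
  simp only [ttr, tmul]
  exact Finset.sup_comm _ _ _ |>.trans (by simp_rw [mul_comm])

lemma tchain_succ {k : ℕ} (F : Fin (k + 1) → TMat n) :
    tchain (k + 1) F = tmul (F 0) (tchain k fun t => F t.succ) := rfl

lemma tchain_snoc : ∀ {k : ℕ} (F : Fin k → TMat n) (M : TMat n),
    tchain (k + 1) (Fin.snoc F M) = tmul (tchain k F) M
  | 0, F, M => by simp [tchain, Fin.snoc]
  | k + 1, F, M => by
    have htail : (fun t : Fin (k + 1) => (Fin.snoc F M : Fin (k + 2) → TMat n) t.succ) =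
        Fin.snoc (fun t => F t.succ) M := by
      funext t
      refine Fin.lastCases ?_ (fun u => ?_) t
      · simp only [Fin.succ_last, Fin.snoc_last]
      · rw [Fin.succ_castSucc, Fin.snoc_castSucc, Fin.snoc_castSucc]
    rw [tchain_succ (Fin.snoc F M), htail, tchain_snoc, Fin.snoc_apply_zero, tchain_succ F,
      tmul_assoc]

lemma tchain_snoc_blocks {ι : Type*} {s : ℕ} (M : TMat n) (Y : ι → TMat n) (f : Fin s → ℕ)
    (c : Fin s → ι) (i : ℕ) (v : ι) :
    tchain (s + 1) (fun t => tmul (tpow M ((Fin.snoc f i : Fin (s + 1) → ℕ) t))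
      (Y ((Fin.snoc c v : Fin (s + 1) → ι) t))) =
      tmul (tchain s fun t => tmul (tpow M (f t)) (Y (c t))) (tmul (tpow M i) (Y v)) := by
  rw [← tchain_snoc]
  congr 1
  funext t
  refine Fin.lastCases ?_ (fun u => ?_) t <;> simp

lemma tpow_tmul_tchain_blocks {s : ℕ} (M : TMat n) (N : Fin (s + 1) → TMat n)
    (f : Fin (s + 1) → ℕ) (j : ℕ) :
    tmul (tpow M j) (tchain (s + 1) fun t => tmul (tpow M (f t)) (N t)) =
      tchain (s + 1) fun t =>
        tmul (tpow M ((Fin.cons (j + f 0) (Fin.tail f) : Fin (s + 1) → ℕ) t)) (N t) := by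
  simp only [tchain_succ, Fin.cons_zero, Fin.cons_succ, Fin.tail, tpow_add, tmul_assoc]

end TropicalAlgebra

section Paths

variable {n : ℕ}

noncomputable def pathWeight (D : TMat n) (p : ℕ → Fin n) (k : ℕ) : ℝ≥0 :=
  ∏ t ∈ range k, D (p t) (p (t + 1))

lemma pathWeight_le_tpow (D : TMat n) (p : ℕ → Fin n) :
    ∀ k, pathWeight D p k ≤ tpow D k (p 0) (p k)
  | 0 => by simp [pathWeight, tId]
  | k + 1 => by
    rw [pathWeight, prod_range_succ, tpow_succ']
    exact (mul_le_mul_left (pathWeight_le_tpow D p k) _).trans (le_tmul _ _ _ _ _)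

lemma exists_pathWeight_eq_tpow_succ (D : TMat n) : ∀ (k : ℕ) (i j : Fin n),
    ∃ p : ℕ → Fin n, p 0 = i ∧ p (k + 1) = j ∧ pathWeight D p (k + 1) = tpow D (k + 1) i j
  | 0, i, j => ⟨fun m => if m = 0 then i else j, rfl, rfl, by simp [pathWeight]⟩
  | k + 1, i, j => by
    obtain ⟨t, -, ht⟩ := exists_mem_eq_sup univ ⟨i, mem_univ i⟩ fun t => D i t * tpow D (k + 1) t j
    obtain ⟨p, hp0, hpk, hpw⟩ := exists_pathWeight_eq_tpow_succ D k t j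
    refine ⟨fun m => match m with | 0 => i | m + 1 => p m, rfl, hpk, ?_⟩
    rw [pathWeight, prod_range_succ', tpow_succ, tmul, ht, ← hpw, pathWeight, mul_comm]
    simp only [hp0]

lemma pathWeight_le_ttr {D : TMat n} {p : ℕ → Fin n} {k : ℕ} (hp : p k = p 0) :
    pathWeight D p k ≤ ttr (tpow D k) := by
  have h := pathWeight_le_tpow D p k
  rw [hp] at h
  exact h.trans (le_sup (f := fun i => tpow D k i i) (mem_univ (p 0)))

lemma ttr_tpow_le_tTr (D : TMat n) {k : ℕ} (hk : 1 ≤ k) (hkn : k ≤ n) :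
    ttr (tpow D k) ≤ tTr D :=
  le_sup (f := fun k => ttr (tpow D k)) (mem_Icc.2 ⟨hk, hkn⟩)

end Paths

lemma NNReal.rpow_one_div_le_iff_le_pow {x c : ℝ≥0} {m : ℕ} (hm : m ≠ 0) :
    x ^ ((1 : ℝ) / m) ≤ c ↔ x ≤ c ^ m := by
  rw [one_div, NNReal.rpow_inv_le_iff (by positivity), NNReal.rpow_natCast]

section SubEigenvectors

variable {n : ℕ}

def SubEigen (M : TMat n) (c : ℝ≥0) (x : Fin n → ℝ≥0) : Prop :=
  ∀ i j, M i j * x j ≤ c * x i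

variable {M N : TMat n} {c d : ℝ≥0} {x : Fin n → ℝ≥0}

lemma subEigen_one_iff : SubEigen M 1 x ↔ tmulVec M x ≤ x := by
  simp only [SubEigen, one_mul, Pi.le_def, tmulVec, Finset.sup_le_iff, mem_univ, true_implies]

lemma subEigen_iff_fobj_le (hx : ∀ i, 0 < x i) : SubEigen M c x ↔ fobj M x ≤ c := by
  simp only [fobj, Finset.sup_le_iff, mem_univ, true_implies, Prod.forall,
    div_le_iff₀ (hx _), SubEigen, mul_comm c]

lemma subEigen_iff_tsmul_inv (hc : c ≠ 0) : SubEigen M c x ↔ SubEigen (tsmul c⁻¹ M) 1 x := by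
  simp only [SubEigen, tsmul, one_mul, mul_assoc, inv_mul_le_iff₀ (pos_iff_ne_zero.2 hc)]

lemma subEigen_tId : SubEigen (tId n) 1 x := by
  intro i j
  by_cases h : i = j <;> simp [tId, h]

namespace SubEigen

lemma of_le (h : ∀ i j, M i j ≤ N i j) (hN : SubEigen N c x) : SubEigen M c x :=
  fun i j => (mul_le_mul_left (h i j) _).trans (hN i j)

lemma mul (hM : SubEigen M c x) (hN : SubEigen N d x) : SubEigen (tmul M N) (c * d) x := by
  intro i j
  rw [tmul, NNReal.finset_sup_mul]
  refine Finset.sup_le fun t _ => ?_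
  calc M i t * N t j * x j = M i t * (N t j * x j) := mul_assoc _ _ _
    _ ≤ M i t * (d * x t) := mul_le_mul_right (hN t j) _
    _ = d * (M i t * x t) := by ring
    _ ≤ d * (c * x i) := mul_le_mul_right (hM i t) _
    _ = c * d * x i := by ring

lemma pow (hM : SubEigen M c x) (k : ℕ) : SubEigen (tpow M k) (c ^ k) x := by
  induction k with
  | zero => simpa using subEigen_tId
  | succ k ih => rw [tpow_succ, pow_succ']; exact hM.mul ih

lemma chain : ∀ {k : ℕ} {F : Fin k → TMat n} {g : Fin k → ℝ≥0},
    (∀ t, SubEigen (F t) (g t) x) → SubEigen (tchain k F) (∏ t, g t) x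
  | 0, _, _, _ => by simpa [tchain] using subEigen_tId
  | _ + 1, _, _, h => by
    rw [tchain_succ, Fin.prod_univ_succ]
    exact (h 0).mul (chain fun t => h t.succ)

lemma ttr_le (hx : ∀ i, 0 < x i) (hM : SubEigen M c x) : ttr M ≤ c :=
  Finset.sup_le fun i _ => le_of_mul_le_mul_right (hM i i) (hx i)

end SubEigen

lemma specRad_le_of_subEigen (hx : ∀ i, 0 < x i) (hM : SubEigen M c x) : specRad M ≤ c := by
  refine Finset.sup_le fun k hk => ?_
  rw [NNReal.rpow_one_div_le_iff_le_pow (by grind)]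
  exact (hM.pow k).ttr_le hx

lemma sigmaC_le_of_subEigen (hx : ∀ i, 0 < x i) (hM : SubEigen M c x) (hC : SubEigen N 1 x) :
    sigmaC M N ≤ c := by
  refine Finset.sup_le fun k _ => Finset.sup_le fun m hm => Finset.sup_le fun f hf => ?_
  rw [NNReal.rpow_one_div_le_iff_le_pow (by grind)]
  have hchain := SubEigen.chain fun t => (hM.pow (f t : ℕ)).mul hC
  simp only [mul_one, prod_pow_eq_pow_sum, (mem_filter.1 hf).2] at hchain
  exact hchain.ttr_le hx

lemma specRad_sup_sigmaC_le_fobj (hx : ∀ i, 0 < x i) (hNx : tmulVec N x ≤ x) :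
    specRad M ⊔ sigmaC M N ≤ fobj M x := by
  have hMx := (subEigen_iff_fobj_le hx).2 (le_refl (fobj M x))
  exact sup_le (specRad_le_of_subEigen hx hMx)
    (sigmaC_le_of_subEigen hx hMx (subEigen_one_iff.2 hNx))

end SubEigenvectors

section Words

variable {ι : Type*} [DecidableEq ι] {n : ℕ}

def letterCount (w : ℕ → ι) (k : ℕ) (v : ι) : ℕ := #{t ∈ range k | w t = v}

lemma letterCount_succ (w : ℕ → ι) (k : ℕ) (v : ι) :
    letterCount w (k + 1) v = letterCount w k v + if w k = v then 1 else 0 := by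
  simp only [letterCount, card_filter, sum_range_succ]

lemma letterCount_eq_zero {w : ℕ → ι} {k : ℕ} {v : ι} :
    letterCount w k v = 0 ↔ ∀ t < k, w t ≠ v := by
  simp [letterCount]

lemma exists_of_letterCount_pos {w : ℕ → ι} {k : ℕ} {v : ι} (h : 0 < letterCount w k v) :
    ∃ t < k, w t = v := by
  simpa [letterCount, card_pos, Finset.Nonempty] using h

lemma forall_eq_of_letterCount_eq {w : ℕ → ι} {k : ℕ} {v : ι} (h : letterCount w k v = k) :
    ∀ t < k, w t = v := by
  simpa using card_filter_eq_iff.1 (h.trans (card_range k).symm)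

lemma sum_letterCount [Fintype ι] (w : ℕ → ι) (k : ℕ) : ∑ v, letterCount w k v = k := by
  simpa [letterCount] using
    (card_eq_sum_card_fiberwise (f := w) (s := range k) (t := univ) (by simp)).symm

lemma prod_eq_prod_pow_letterCount {M : Type*} [CommMonoid M] [Fintype ι] (g : ι → M)
    (w : ℕ → ι) (k : ℕ) : ∏ t ∈ range k, g (w t) = ∏ v, g v ^ letterCount w k v := by
  rw [← prod_fiberwise' (range k) w g]
  simp [letterCount]

lemma card_filter_snoc {s : ℕ} (c : Fin s → ι) (x v : ι) :
    #{t | (Fin.snoc c x : Fin (s + 1) → ι) t = v} = #{t | c t = v} + if x = v then 1 else 0 := by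
  simp only [card_filter, Fin.sum_univ_castSucc, Fin.snoc_castSucc, Fin.snoc_last]

/-- Reading a word from the left, each letter other than `a` closes a block `Y a ^ i ⊗ Y v`;
the trailing letters `a` are kept apart as a power `Y a ^ j`. -/
lemma exists_blocks (Y : ι → TMat n) (a : ι) (w : ℕ → ι) (p : ℕ → Fin n) : ∀ k : ℕ,
    ∃ (s j : ℕ) (f : Fin s → ℕ) (c : Fin s → ι), s + letterCount w k a = k ∧
      (∀ t, c t ≠ a) ∧ (∀ v, v ≠ a → #{t | c t = v} = letterCount w k v) ∧
      j + ∑ t, f t = letterCount w k a ∧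
      ∏ t ∈ range k, Y (w t) (p t) (p (t + 1)) ≤
        tmul (tchain s fun t => tmul (tpow (Y a) (f t)) (Y (c t))) (tpow (Y a) j) (p 0) (p k)
  | 0 => ⟨0, 0, Fin.elim0, Fin.elim0, by simp [letterCount], fun t => t.elim0,
      by simp [letterCount], by simp [letterCount], by simp [tchain, tId]⟩
  | k + 1 => by
    obtain ⟨s, j, f, c, hs, hca, hcnt, hsum, hle⟩ := exists_blocks Y a w p k
    simp only [letterCount_succ, prod_range_succ]
    by_cases hwk : w k = a
    · refine ⟨s, j + 1, f, c, by simp [hwk]; omega, hca, fun v hv => ?_, by simp [hwk]; omega, ?_⟩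
      · simp [hcnt v hv, hwk, Ne.symm hv]
      · rw [tpow_succ', ← tmul_assoc, hwk]
        exact (mul_le_mul_left hle _).trans (le_tmul _ _ _ _ _)
    · refine ⟨s + 1, 0, Fin.snoc f j, Fin.snoc c (w k), by simp [hwk]; omega, ?_, fun v hv => ?_,
        ?_, ?_⟩
      · exact Fin.lastCases (by simpa using hwk) (fun u => by simpa using hca u)
      · rw [card_filter_snoc, hcnt v hv]
      · simp [Fin.sum_univ_castSucc, hwk]; omega
      · rw [tpow_zero, tmul_tId, tchain_snoc_blocks, ← tmul_assoc]
        exact (mul_le_mul_left hle _).trans (le_tmul _ _ _ _ _)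

/-- Since the trace is invariant under cyclic rotation, the trailing power `Y a ^ j` of a closed
walk can be merged into its first block. -/
lemma exists_blocks_of_cycle (Y : ι → TMat n) (a : ι) {w : ℕ → ι} {p : ℕ → Fin n} {k : ℕ}
    (hp : p k = p 0) (hw : ∃ t < k, w t ≠ a) :
    ∃ (s : ℕ) (f : Fin s → ℕ) (c : Fin s → ι), 0 < s ∧ s + letterCount w k a = k ∧
      (∀ t, c t ≠ a) ∧ (∀ v, v ≠ a → #{t | c t = v} = letterCount w k v) ∧
      ∑ t, f t = letterCount w k a ∧
      ∏ t ∈ range k, Y (w t) (p t) (p (t + 1)) ≤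
        ttr (tchain s fun t => tmul (tpow (Y a) (f t)) (Y (c t))) := by
  obtain ⟨s, j, f, c, hs, hca, hcnt, hsum, hle⟩ := exists_blocks Y a w p k
  obtain ⟨t₀, ht₀, hwt₀⟩ := hw
  obtain ⟨s, rfl⟩ : ∃ s', s = s' + 1 := by
    refine Nat.exists_eq_succ_of_ne_zero fun h0 => ?_
    subst h0
    exact letterCount_eq_zero.1 (by simpa using (hcnt _ hwt₀).symm) t₀ ht₀ rfl
  refine ⟨s + 1, Fin.cons (j + f 0) (Fin.tail f), c, s.succ_pos, hs, hca, hcnt, ?_, ?_⟩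
  · rw [Fin.sum_univ_succ, ← hsum, Fin.sum_univ_succ]
    simp [Fin.tail]; ring
  · rw [← tpow_tmul_tchain_blocks, ← ttr_tmul_comm]
    rw [hp] at hle
    exact hle.trans (le_sup (f := fun i => tmul _ _ i i) (mem_univ _))

end Words

section SpectralBounds

variable {n : ℕ}

lemma ttr_tpow_le_specRad_pow (M : TMat n) {k : ℕ} (hk : 1 ≤ k) (hkn : k ≤ n) :
    ttr (tpow M k) ≤ specRad M ^ k :=
  (NNReal.rpow_one_div_le_iff_le_pow (by omega)).1
    (le_sup (f := fun k => ttr (tpow M k) ^ ((1 : ℝ) / k)) (mem_Icc.2 ⟨hk, hkn⟩))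

lemma exists_mem_tuples {s m : ℕ} (f : Fin s → ℕ) (hf : ∑ t, f t = m) :
    ∃ F ∈ tuples s m, ∀ t, (F t : ℕ) = f t := by
  have hle t : f t < m + 1 := Nat.lt_succ_of_le (hf ▸ single_le_sum (by simp) (mem_univ t))
  exact ⟨fun t => ⟨f t, hle t⟩, by simp [tuples, hf], fun t => rfl⟩

lemma ttr_blocks_le_sigmaC_pow (M N : TMat n) {s m : ℕ} (f : Fin s → ℕ) (hs : 1 ≤ s)
    (hm : 1 ≤ m) (hsm : s + m ≤ n) (hf : ∑ t, f t = m) :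
    ttr (tchain s fun t => tmul (tpow M (f t)) N) ≤ sigmaC M N ^ m := by
  obtain ⟨F, hF, hFf⟩ := exists_mem_tuples f hf
  rw [← NNReal.rpow_one_div_le_iff_le_pow (by omega)]
  simp only [← hFf]
  exact le_sup_of_le (mem_Icc.2 ⟨hs, by omega⟩) <| le_sup_of_le (mem_Icc.2 ⟨hm, by omega⟩) <|
    le_sup (f := fun F : Fin s → Fin (m + 1) =>
      ttr (tchain s fun t => tmul (tpow M (F t : ℕ)) N) ^ ((1 : ℝ) / m)) hF

lemma ttr_blocks_le_rklm (A B C : TMat n) {s m : ℕ} (f : Fin s → ℕ) (c : Fin s → Fin 3)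
    (hc : ∀ t, c t ≠ 0) (hf : ∑ t, f t = m) :
    ttr (tchain s fun t => tmul (tpow A (f t)) (![A, B, C] (c t))) ≤
      rklm A B C s #{t | c t = 1} m := by
  obtain ⟨F, hF, hFf⟩ := exists_mem_tuples f hf
  set J : Fin s → Fin 2 := fun t => if c t = 1 then 1 else 0
  have hJ : J ∈ binTuples s #{t | c t = 1} := by
    simp only [binTuples, mem_filter, mem_univ, true_and, card_filter, J]
    exact sum_congr rfl fun t _ => by split_ifs <;> rfl
  have hY t : ![A, B, C] (c t) = tmul (tpow B (J t : ℕ)) (tpow C (1 - (J t : ℕ))) := by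
    simp only [J]
    have := hc t
    generalize c t = v at this ⊢
    fin_cases v <;> simp_all
  simp only [hY, ← hFf]
  exact le_sup_of_le hF (le_sup (f := fun J : Fin s → Fin 2 => ttr (tchain s fun t =>
    tmul (tpow A (F t : ℕ)) (tmul (tpow B (J t : ℕ)) (tpow C (1 - (J t : ℕ)))))) hJ)

lemma rklm_le_Hfun_pow_mul (A B C : TMat n) {τ : ℝ≥0} (hτ : 0 < τ) {s l m : ℕ} (hl : 1 ≤ l)
    (hls : l ≤ s) (hm : 1 ≤ m) (hsm : s + m ≤ n) :
    rklm A B C s l m ≤ Hfun A B C τ ^ m * τ ^ l := by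
  have hH : rklm A B C s l m ^ ((1 : ℝ) / m) * τ ^ (-(l : ℝ) / m) ≤ Hfun A B C τ :=
    le_sup_of_le (mem_Icc.2 ⟨by omega, by omega⟩) <| le_sup_of_le (mem_Icc.2 ⟨hm, by omega⟩) <|
      le_sup (f := fun l => rklm A B C s l m ^ ((1 : ℝ) / m) * τ ^ (-(l : ℝ) / m))
        (mem_Icc.2 ⟨hl, hls⟩)
  have hτl : τ ^ (-(l : ℝ) / m) = (τ ^ ((l : ℝ) / m))⁻¹ := by rw [neg_div, NNReal.rpow_neg]
  rw [hτl, ← div_eq_mul_inv, div_le_iff₀ (NNReal.rpow_pos hτ),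
    NNReal.rpow_one_div_le_iff_le_pow (by omega), mul_pow, ← NNReal.rpow_natCast (_ ^ _),
    ← NNReal.rpow_mul, div_mul_cancel₀ _ (by positivity), NNReal.rpow_natCast] at hH
  exact hH

end SpectralBounds

section Cycles

variable {n : ℕ}

lemma cycle_le_ttr_of_forall_eq {ι : Type*} (Y : ι → TMat n) {w : ℕ → ι} {p : ℕ → Fin n}
    {k : ℕ} {v : ι} (hp : p k = p 0) (hw : ∀ t < k, w t = v) :
    ∏ t ∈ range k, Y (w t) (p t) (p (t + 1)) ≤ ttr (tpow (Y v) k) := by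
  rw [prod_congr rfl fun t ht => by rw [hw t (mem_range.1 ht)]]
  exact pathWeight_le_ttr hp

lemma cycle_le_sigmaC_pow {ι : Type*} [DecidableEq ι] (Y : ι → TMat n) {a b : ι} (hab : a ≠ b)
    {w : ℕ → ι} {p : ℕ → Fin n} {k : ℕ} (hp : p k = p 0) (hkn : k ≤ n)
    (hk : letterCount w k a + letterCount w k b = k) (ha : 0 < letterCount w k a)
    (hb : 0 < letterCount w k b) :
    ∏ t ∈ range k, Y (w t) (p t) (p (t + 1)) ≤ sigmaC (Y a) (Y b) ^ letterCount w k a := by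
  obtain ⟨t₀, ht₀, hwt₀⟩ := exists_of_letterCount_pos hb
  obtain ⟨s, f, c, hs, hsk, -, hcnt, hsum, hle⟩ :=
    exists_blocks_of_cycle Y a hp ⟨t₀, ht₀, hwt₀ ▸ hab.symm⟩
  have hcb : ∀ t, c t = b := by
    have hcard : #{t | c t = b} = #(univ : Finset (Fin s)) := by
      rw [hcnt b hab.symm, card_univ, Fintype.card_fin]; omega
    simpa using card_filter_eq_iff.1 hcard
  simp only [hcb] at hle
  exact hle.trans (ttr_blocks_le_sigmaC_pow _ _ f hs ha (by omega) hsum)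

lemma cycle_le_Hfun_pow_mul (A B C : TMat n) {τ : ℝ≥0} (hτ : 0 < τ) {w : ℕ → Fin 3}
    {p : ℕ → Fin n} {k : ℕ} (hp : p k = p 0) (hkn : k ≤ n) (hA : 0 < letterCount w k 0)
    (hB : 0 < letterCount w k 1) :
    ∏ t ∈ range k, ![A, B, C] (w t) (p t) (p (t + 1)) ≤
      Hfun A B C τ ^ letterCount w k 0 * τ ^ letterCount w k 1 := by
  obtain ⟨t₀, ht₀, hwt₀⟩ := exists_of_letterCount_pos hB
  obtain ⟨s, f, c, -, hsk, hca, hcnt, hsum, hle⟩ :=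
    exists_blocks_of_cycle ![A, B, C] 0 (w := w) hp ⟨t₀, ht₀, by rw [hwt₀]; decide⟩
  have hcnt1 := hcnt 1 (by decide)
  have hls : letterCount w k 1 ≤ s := hcnt1 ▸ (card_filter_le _ _).trans (by simp)
  refine hle.trans ((ttr_blocks_le_rklm A B C f c hca hsum).trans ?_)
  rw [hcnt1]
  exact rklm_le_Hfun_pow_mul A B C hτ hB hls hA (by omega)

lemma cycle_le_pow_mul_pow {A B C : TMat n} {α β : ℝ≥0} (hA : specRad A ≤ α)
    (hσ : sigmaC A C ≤ α) (hB : specRad B ≤ β) (hθ : sigmaC B C ≤ β) (hC : tTr C ≤ 1)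
    (hβ : 0 < β) (hH : Hfun A B C β ≤ α) {w : ℕ → Fin 3} {p : ℕ → Fin n} {k : ℕ}
    (hp : p k = p 0) (hk : 1 ≤ k) (hkn : k ≤ n) :
    ∏ t ∈ range k, ![A, B, C] (w t) (p t) (p (t + 1)) ≤
      α ^ letterCount w k 0 * β ^ letterCount w k 1 := by
  have htotal := sum_letterCount w k
  rw [Fin.sum_univ_three] at htotal
  rcases Nat.eq_zero_or_pos (letterCount w k 0) with h0 | h0 <;>
    rcases Nat.eq_zero_or_pos (letterCount w k 1) with h1 | h1
  · calc _ ≤ ttr (tpow C k) :=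
          cycle_le_ttr_of_forall_eq ![A, B, C] hp (forall_eq_of_letterCount_eq (v := 2) (by omega))
      _ ≤ 1 := (ttr_tpow_le_tTr C hk hkn).trans hC
      _ = _ := by simp [h0, h1]
  · rcases Nat.eq_zero_or_pos (letterCount w k 2) with h2 | h2
    · calc _ ≤ ttr (tpow B k) :=
            cycle_le_ttr_of_forall_eq ![A, B, C] hp
              (forall_eq_of_letterCount_eq (v := 1) (by omega))
        _ ≤ β ^ k := (ttr_tpow_le_specRad_pow B hk hkn).trans (pow_le_pow_left₀ zero_le hB k)
        _ = _ := by simp [h0, (by omega : letterCount w k 1 = k)]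
    · calc _ ≤ sigmaC B C ^ letterCount w k 1 :=
            cycle_le_sigmaC_pow ![A, B, C] (a := 1) (b := 2) (by decide) hp hkn (by omega) h1 h2
        _ ≤ _ := by simpa [h0] using pow_le_pow_left₀ zero_le hθ _
  · rcases Nat.eq_zero_or_pos (letterCount w k 2) with h2 | h2
    · calc _ ≤ ttr (tpow A k) :=
            cycle_le_ttr_of_forall_eq ![A, B, C] hp
              (forall_eq_of_letterCount_eq (v := 0) (by omega))
        _ ≤ α ^ k := (ttr_tpow_le_specRad_pow A hk hkn).trans (pow_le_pow_left₀ zero_le hA k)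
        _ = _ := by simp [h1, (by omega : letterCount w k 0 = k)]
    · calc _ ≤ sigmaC A C ^ letterCount w k 0 :=
            cycle_le_sigmaC_pow ![A, B, C] (a := 0) (b := 2) (by decide) hp hkn (by omega) h0 h2
        _ ≤ _ := by simpa [h1] using pow_le_pow_left₀ zero_le hσ _
  · calc _ ≤ Hfun A B C β ^ letterCount w k 0 * β ^ letterCount w k 1 :=
          cycle_le_Hfun_pow_mul A B C hβ hp hkn h0 h1
      _ ≤ _ := by gcongr

lemma exists_word_pathWeight_eq {ι : Type*} [Fintype ι] [Nonempty ι] {D : TMat n}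
    (Y : ι → TMat n) (g : ι → ℝ≥0) (hD : ∀ i j, D i j = univ.sup fun v => g v * Y v i j)
    (p : ℕ → Fin n) (k : ℕ) :
    ∃ w : ℕ → ι, pathWeight D p k =
      (∏ t ∈ range k, g (w t)) * ∏ t ∈ range k, Y (w t) (p t) (p (t + 1)) := by
  have hmax t : ∃ v, D (p t) (p (t + 1)) = g v * Y v (p t) (p (t + 1)) := by
    obtain ⟨v, -, hv⟩ := exists_mem_eq_sup univ univ_nonempty
      fun v => g v * Y v (p t) (p (t + 1))
    exact ⟨v, (hD _ _).trans hv⟩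
  choose w hw using hmax
  exact ⟨w, by rw [← prod_mul_distrib]; exact prod_congr rfl fun t _ => hw t⟩

lemma tadd_tsmul_apply_eq_sup (A B C : TMat n) (α β : ℝ≥0) (i j : Fin n) :
    tadd (tadd (tsmul α⁻¹ A) (tsmul β⁻¹ B)) C i j =
      univ.sup fun v : Fin 3 => ![α⁻¹, β⁻¹, 1] v * ![A, B, C] v i j := by
  rw [show (univ : Finset (Fin 3)) = {0, 1, 2} by decide, sup_insert, sup_insert, sup_singleton]
  simp only [tadd, tsmul, sup_assoc, Matrix.cons_val_zero, Matrix.cons_val_one,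
    Matrix.cons_val_two, Matrix.vecHead, Matrix.vecTail]
  simp

lemma tTr_tadd_tsmul_le_one {A B C : TMat n} {α β : ℝ≥0} (hα : 0 < α) (hA : specRad A ≤ α)
    (hσ : sigmaC A C ≤ α) (hβ : 0 < β) (hB : specRad B ≤ β) (hθ : sigmaC B C ≤ β)
    (hC : tTr C ≤ 1) (hH : Hfun A B C β ≤ α) :
    tTr (tadd (tadd (tsmul α⁻¹ A) (tsmul β⁻¹ B)) C) ≤ 1 := by
  refine Finset.sup_le fun k hk => Finset.sup_le fun i _ => ?_
  obtain ⟨hk1, hkn⟩ := mem_Icc.1 hk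
  obtain ⟨k, rfl⟩ : ∃ k', k = k' + 1 := Nat.exists_eq_succ_of_ne_zero (by omega)
  obtain ⟨p, hp0, hpk, hpw⟩ := exists_pathWeight_eq_tpow_succ _ k i i
  obtain ⟨w, hw⟩ := exists_word_pathWeight_eq _ _ (tadd_tsmul_apply_eq_sup A B C α β) p (k + 1)
  have hcycle := cycle_le_pow_mul_pow hA hσ hB hθ hC hβ hH (w := w) (hpk.trans hp0.symm) hk1 hkn
  rw [← hpw, hw, prod_eq_prod_pow_letterCount, Fin.prod_univ_three]
  calc _ ≤ (α⁻¹ ^ letterCount w (k + 1) 0 * β⁻¹ ^ letterCount w (k + 1) 1) *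
        (α ^ letterCount w (k + 1) 0 * β ^ letterCount w (k + 1) 1) := by
        simpa using mul_le_mul_right hcycle _
    _ = 1 := by
        rw [mul_mul_mul_comm, ← mul_pow, ← mul_pow, inv_mul_cancel₀ hα.ne',
          inv_mul_cancel₀ hβ.ne', one_pow, one_pow, one_mul]

end Cycles

section KleeneStar

variable {n : ℕ}

lemma exists_lt_le_apply_eq_apply (p : ℕ → Fin n) : ∃ u v, u < v ∧ v ≤ n ∧ p u = p v := by
  obtain ⟨x, y, hne, hxy⟩ :=
    Fintype.exists_ne_map_eq_of_card_lt (fun t : Fin (n + 1) => p t) (by simp)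
  rcases lt_or_gt_of_ne (Fin.val_ne_of_ne hne) with h | h
  · exact ⟨x, y, h, Nat.lt_succ_iff.1 y.isLt, hxy⟩
  · exact ⟨y, x, h, Nat.lt_succ_iff.1 x.isLt, hxy.symm⟩

lemma exists_pathWeight_eq_mul (D : TMat n) (p : ℕ → Fin n) {u v k : ℕ} (huv : u ≤ v)
    (hvk : v ≤ k) (hp : p u = p v) :
    ∃ q : ℕ → Fin n, q 0 = p 0 ∧ q (k - (v - u)) = p k ∧
      pathWeight D p k =
        pathWeight D q (k - (v - u)) * pathWeight D (fun m => p (u + m)) (v - u) := by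
  set q := fun m => if m < u then p m else p (m + (v - u))
  have hqu : q u = p u := by simp [q, Nat.add_sub_cancel' huv, hp]
  refine ⟨q, ?_, by simp [q, Nat.sub_add_cancel (by omega : v - u ≤ k)]; omega, ?_⟩
  · rcases Nat.eq_zero_or_pos u with rfl | hu
    · exact hqu
    · simp [q, hu]
  have hhead : ∏ m ∈ range u, D (q m) (q (m + 1)) = ∏ m ∈ range u, D (p m) (p (m + 1)) := by
    refine prod_congr rfl fun m hm => ?_
    have hm := mem_range.1 hm
    rcases Nat.lt_or_ge (m + 1) u with h | h
    · simp [q, hm, h]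
    · obtain rfl : m + 1 = u := by omega
      simp only [hqu, q, if_pos hm]
  have htail : ∏ m ∈ Ico u (k - (v - u)), D (q m) (q (m + 1)) =
      ∏ m ∈ Ico v k, D (p m) (p (m + 1)) := by
    have hshift : ∀ m ∈ Ico u (k - (v - u)),
        D (q m) (q (m + 1)) = (fun m => D (p m) (p (m + 1))) (m + (v - u)) := fun m hm => by
      have := (mem_Ico.1 hm).1
      simp only [q, if_neg (by omega : ¬ m < u), if_neg (by omega : ¬ m + 1 < u),
        Nat.add_right_comm m 1]
    rw [prod_congr rfl hshift]
    exact (prod_Ico_add' (fun m => D (p m) (p (m + 1))) _ _ _).trans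
      (by rw [Nat.add_sub_cancel' huv, Nat.sub_add_cancel (by omega)])
  have hcycle :
      pathWeight D (fun m => p (u + m)) (v - u) = ∏ m ∈ Ico u v, D (p m) (p (m + 1)) := by
    rw [prod_Ico_eq_prod_range]; rfl
  rw [hcycle, pathWeight, pathWeight, ← prod_range_mul_prod_Ico _ (by omega : u ≤ k - (v - u)),
    hhead, htail, ← prod_range_mul_prod_Ico _ (huv.trans hvk), ← prod_Ico_consecutive _ huv hvk]
  ring

lemma tpow_le_tstar {D : TMat n} (hD : tTr D ≤ 1) (k : ℕ) (i j : Fin n) :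
    tpow D k i j ≤ tstar D i j := by
  induction k using Nat.strong_induction_on generalizing i j with
  | _ k ih =>
  rcases Nat.lt_or_ge k n with hkn | hkn
  · exact le_sup (f := fun k => tpow D k i j) (mem_range.2 hkn)
  obtain ⟨k, rfl⟩ : ∃ k', k = k' + 1 := Nat.exists_eq_succ_of_ne_zero (by have := i.pos; omega)
  obtain ⟨p, hp0, hpk, hpw⟩ := exists_pathWeight_eq_tpow_succ D k i j
  obtain ⟨u, v, huv, hvn, hp⟩ := exists_lt_le_apply_eq_apply p
  obtain ⟨q, hq0, hqk, hsplit⟩ := exists_pathWeight_eq_mul D p (k := k + 1) huv.le (by omega) hp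
  have hcycle : pathWeight D (fun m => p (u + m)) (v - u) ≤ 1 :=
    ((pathWeight_le_ttr (by simp [Nat.add_sub_cancel' huv.le, hp])).trans
      (ttr_tpow_le_tTr D (by omega) (by omega))).trans hD
  calc tpow D (k + 1) i j = pathWeight D q (k + 1 - (v - u)) * pathWeight D _ (v - u) := by
        rw [← hpw, hsplit]
    _ ≤ pathWeight D q (k + 1 - (v - u)) := mul_le_of_le_one_right zero_le hcycle
    _ ≤ tpow D (k + 1 - (v - u)) i j := by
        simpa [hq0, hqk, hp0, hpk] using pathWeight_le_tpow D q (k + 1 - (v - u))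
    _ ≤ tstar D i j := ih _ (by omega) i j

lemma exists_pos_subEigen_one {D : TMat n} (hD : tTr D ≤ 1) :
    ∃ x : Fin n → ℝ≥0, (∀ i, 0 < x i) ∧ SubEigen D 1 x := by
  refine ⟨fun i => univ.sup (tstar D i), fun i => ?_, fun i t => ?_⟩
  · refine lt_of_lt_of_le one_pos (le_sup_of_le (mem_univ i) ?_)
    exact (by simp [tId] : (1 : ℝ≥0) = tpow D 0 i i).trans_le
      (le_sup (f := fun k => tpow D k i i) (mem_range.2 i.pos))
  · simp only [one_mul, NNReal.mul_finset_sup, tstar]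
    refine Finset.sup_le fun j _ => le_sup_of_le (mem_univ j) (Finset.sup_le fun k _ => ?_)
    exact (le_tmul D (tpow D k) i j t).trans (tpow_le_tstar hD (k + 1) i j)

end KleeneStar

lemma setOf_paretoMin_eq_singleton {V : Set (ℝ≥0 × ℝ≥0)} {p : ℝ≥0 × ℝ≥0} (hp : p ∈ V)
    (hle : ∀ q ∈ V, p ≤ q) : {q | ParetoMin V q} = {p} := by
  ext q
  refine ⟨fun ⟨hq, hmin⟩ => by_contra fun hne => hmin ⟨p, hp, (hle q hq).1, (hle q hq).2, ?_⟩,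
    ?_⟩
  · exact Ne.symm hne
  · rintro rfl
    exact ⟨hp, fun ⟨r, hr, h1, h2, hne⟩ =>
      hne (le_antisymm (Prod.mk_le_mk.2 ⟨h1, h2⟩) (hle r hr))⟩

/-- If H(max(μ,θ)) ≤ max(λ,σ), then (i) every feasible positive x satisfies
f_A(x) ≥ max(λ,σ) and f_B(x) ≥ max(μ,θ); (ii) some feasible positive x attains both values;
consequently the Pareto frontier reduces to the single point (max(λ,σ), max(μ,θ)). -/
theorem stmt14 {n : ℕ} (A B C : TMat n)
    (hlam : 0 < specRad A) (hmu : 0 < specRad B) (hC : tTr C ≤ 1)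
    (hH : Hfun A B C (specRad B ⊔ sigmaC B C) ≤ specRad A ⊔ sigmaC A C) :
    (∀ x : Fin n → ℝ≥0, (∀ i, 0 < x i) → tmulVec C x ≤ x →
        specRad A ⊔ sigmaC A C ≤ fobj A x ∧ specRad B ⊔ sigmaC B C ≤ fobj B x) ∧
    (∃ x : Fin n → ℝ≥0, (∀ i, 0 < x i) ∧ tmulVec C x ≤ x ∧
        fobj A x = specRad A ⊔ sigmaC A C ∧ fobj B x = specRad B ⊔ sigmaC B C) ∧
    {p | ParetoMin (VC A B C) p} =
      {(specRad A ⊔ sigmaC A C, specRad B ⊔ sigmaC B C)} := by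
  set α := specRad A ⊔ sigmaC A C
  set β := specRad B ⊔ sigmaC B C
  have hα : 0 < α := hlam.trans_le le_sup_left
  have hβ : 0 < β := hmu.trans_le le_sup_left
  have lower (x : Fin n → ℝ≥0) (hx : ∀ i, 0 < x i) (hCx : tmulVec C x ≤ x) :
      α ≤ fobj A x ∧ β ≤ fobj B x :=
    ⟨specRad_sup_sigmaC_le_fobj hx hCx, specRad_sup_sigmaC_le_fobj hx hCx⟩
  obtain ⟨x, hx, hDx⟩ := exists_pos_subEigen_one <|
    tTr_tadd_tsmul_le_one hα le_sup_left le_sup_right hβ le_sup_left le_sup_right hC hH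
  have hCx : tmulVec C x ≤ x := subEigen_one_iff.1 (hDx.of_le fun _ _ => le_sup_right)
  have hAx : fobj A x ≤ α := (subEigen_iff_fobj_le hx).1 <| (subEigen_iff_tsmul_inv hα.ne').2 <|
    hDx.of_le fun _ _ => le_sup_of_le_left le_sup_left
  have hBx : fobj B x ≤ β := (subEigen_iff_fobj_le hx).1 <| (subEigen_iff_tsmul_inv hβ.ne').2 <|
    hDx.of_le fun _ _ => le_sup_of_le_left le_sup_right
  have hAα := hAx.antisymm (lower x hx hCx).1
  have hBβ := hBx.antisymm (lower x hx hCx).2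
  refine ⟨lower, ⟨x, hx, hCx, hAα, hBβ⟩,
    setOf_paretoMin_eq_singleton ⟨x, hx, hCx, by rw [hAα, hBβ]⟩ ?_⟩
  rintro _ ⟨y, hy, hCy, rfl⟩
  exact lower y hy hCy
end
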